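/- Fix ε ∈ {0,1} and real parameters α ≠ 0, β with α² + β² − 1 = ε((β−1)/α)². Define m = u_xx − εu and the one-forms ω¹ = (m − β + εα⁻²(β−1)) dx + (−u_x β α⁻¹ − β α⁻² − um − 1 + uβ + u_x α⁻¹ + α⁻²) dt, ω² = α dx + (−βα⁻¹ − αu + α⁻¹ + u_x) dt, ω³ = (m+1) dx + (ε u α⁻²(β−1) − um + α⁻² + u_x/α − u − βα⁻² − u_x β/α) dt. Then the structure equations dω¹ = ω³ ∧ ω², dω² = ω¹ ∧ ω³, dω³ = ω¹ ∧ ω² hold whenever u(x,t) satisfies −2u_x u_xx + 3εu_x u − u u_xxx + εu_t − u_xxt = 0. -/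

import Mathlib

noncomputable section

/-- Partial derivative in the first variable. -/
def pdx (f : ℝ → ℝ → ℝ) (x t : ℝ) : ℝ := deriv (fun x' => f x' t) x

/-- Partial derivative in the second variable. -/
def pdt (f : ℝ → ℝ → ℝ) (x t : ℝ) : ℝ := deriv (fun t' => f x t') t

/-- Smoothness of a function of two real variables. -/
def Smooth2 (f : ℝ → ℝ → ℝ) : Prop := ContDiff ℝ (⊤ : ℕ∞) (fun p : ℝ × ℝ => f p.1 p.2)

/-- m = u_xx - ε u -/
def mch (u : ℝ → ℝ → ℝ) (ε : ℝ) : ℝ → ℝ → ℝ := fun a b =>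
  pdx (fun c d => pdx u c d) a b - ε * u a b

/-- dt-coefficient of ω¹ for the CH/HS family -/
def chF12 (u : ℝ → ℝ → ℝ) (ε α β : ℝ) : ℝ → ℝ → ℝ := fun a b =>
  - pdx u a b * β / α - β / α ^ 2 - u a b * mch u ε a b - 1 + u a b * β
    + pdx u a b / α + 1 / α ^ 2

/-- dt-coefficient of ω² for the CH/HS family -/
def chF22 (u : ℝ → ℝ → ℝ) (α β : ℝ) : ℝ → ℝ → ℝ := fun a b =>
  - β / α - α * u a b + 1 / α + pdx u a b

/-- dt-coefficient of ω³ for the CH/HS family -/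
def chF32 (u : ℝ → ℝ → ℝ) (ε α β : ℝ) : ℝ → ℝ → ℝ := fun a b =>
  ε * u a b / α ^ 2 * (β - 1) - u a b * mch u ε a b + 1 / α ^ 2
    + pdx u a b / α - u a b - β / α ^ 2 - pdx u a b * β / α

section aux
variable (u : ℝ → ℝ → ℝ) (x t : ℝ)

lemma pdx_eq_fderiv (f : ℝ → ℝ → ℝ) (hf : Smooth2 f) (a b : ℝ) :
    pdx f a b = fderiv ℝ (fun p : ℝ × ℝ => f p.1 p.2) (a, b) (1, 0) := by
  have hF : HasFDerivAt (fun p : ℝ × ℝ => f p.1 p.2)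
      (fderiv ℝ (fun p : ℝ × ℝ => f p.1 p.2) (a, b)) (a, b) :=
    (hf.differentiable (by simp) (a, b)).hasFDerivAt
  have hι : HasFDerivAt (fun x' : ℝ => (x', b))
      ((ContinuousLinearMap.id ℝ ℝ).prod 0) a :=
    (hasFDerivAt_id a).prodMk (hasFDerivAt_const b a)
  have := (hF.comp a hι).hasDerivAt
  simpa [pdx, Function.comp_def] using this.deriv

lemma smooth2_pdx {f : ℝ → ℝ → ℝ} (hf : Smooth2 f) : Smooth2 (pdx f) := by
  have h : ContDiff ℝ (⊤ : ℕ∞) (fun p : ℝ × ℝ =>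
      fderiv ℝ (fun q : ℝ × ℝ => f q.1 q.2) p (1, 0)) :=
    (hf.fderiv_right (by simp)).clm_apply contDiff_const
  have : (fun p : ℝ × ℝ => pdx f p.1 p.2) = (fun p : ℝ × ℝ => fderiv ℝ (fun q : ℝ × ℝ => f q.1 q.2) p (1, 0)) := funext fun p => pdx_eq_fderiv f hf p.1 p.2
  rw [Smooth2, this]; exact h

lemma smooth2_diffX {f : ℝ → ℝ → ℝ} (hf : Smooth2 f) (t x : ℝ) :
    DifferentiableAt ℝ (fun x' => f x' t) x := by
  have : ContDiff ℝ (⊤ : ℕ∞) (fun x' : ℝ => f x' t) :=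
    hf.comp (contDiff_id.prodMk contDiff_const)
  exact this.differentiable (by simp) x

lemma smooth2_diffT {f : ℝ → ℝ → ℝ} (hf : Smooth2 f) (x t : ℝ) :
    DifferentiableAt ℝ (fun t' => f x t') t := by
  have : ContDiff ℝ (⊤ : ℕ∞) (fun t' : ℝ => f x t') :=
    hf.comp (contDiff_const.prodMk contDiff_id)
  exact this.differentiable (by simp) t

section derivs
variable (u : ℝ → ℝ → ℝ) (x t : ℝ)

lemma hDU (hu : Smooth2 u) : HasDerivAt (fun y => u y t) (pdx u x t) x :=
  (smooth2_diffX hu t x).hasDerivAt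

lemma hDV (hu : Smooth2 u) : HasDerivAt (fun y => pdx u y t)
    (pdx (fun c d => pdx u c d) x t) x :=
  (smooth2_diffX (smooth2_pdx hu) t x).hasDerivAt

lemma hDW (hu : Smooth2 u) : HasDerivAt (fun y => pdx (fun c d => pdx u c d) y t)
    (pdx (fun a b => pdx (fun c d => pdx u c d) a b) x t) x :=
  (smooth2_diffX (smooth2_pdx (smooth2_pdx hu)) t x).hasDerivAt

lemma hTU (hu : Smooth2 u) : HasDerivAt (fun t' => u x t') (pdt u x t) t :=
  (smooth2_diffT hu x t).hasDerivAt

lemma hTW (hu : Smooth2 u) : HasDerivAt (fun t' => pdx (fun c d => pdx u c d) x t')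
    (pdt (fun a b => pdx (fun c d => pdx u c d) a b) x t) t :=
  (smooth2_diffT (smooth2_pdx (smooth2_pdx hu)) x t).hasDerivAt

end derivs


variable (ε α β : ℝ)

lemma pdx_chF12 (hu : Smooth2 u) (x t : ℝ) :
    pdx (chF12 u ε α β) x t =
      -pdx (fun c d => pdx u c d) x t * β / α
        - (pdx u x t * (pdx (fun c d => pdx u c d) x t - ε * u x t)
            + u x t * (pdx (fun a b => pdx (fun c d => pdx u c d) a b) x t - ε * pdx u x t))
        + pdx u x t * β
        + pdx (fun c d => pdx u c d) x t / α := by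
  have hU := hDU u x t hu
  have hV := hDV u x t hu
  have hW := hDW u x t hu
  have h : HasDerivAt (fun x' => chF12 u ε α β x' t)
      (-pdx (fun c d => pdx u c d) x t * β / α
        - (pdx u x t * (pdx (fun c d => pdx u c d) x t - ε * u x t)
            + u x t * (pdx (fun a b => pdx (fun c d => pdx u c d) a b) x t - ε * pdx u x t))
        + pdx u x t * β
        + pdx (fun c d => pdx u c d) x t / α) x := by
    simp only [chF12, mch]
    have := ((((((((hV.neg).mul_const β).div_const α).sub_const (β / α ^ 2)).sub
        (hU.mul (hW.sub (hU.const_mul ε)))).sub_const 1).add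
        (hU.mul_const β)).add (hV.div_const α)).add_const (1 / α ^ 2)
    exact this
  simpa [pdx] using h.deriv

lemma pdx_chF22 (hu : Smooth2 u) (x t : ℝ) :
    pdx (chF22 u α β) x t = -(α * pdx u x t) + pdx (fun c d => pdx u c d) x t := by
  have hU := hDU u x t hu
  have hV := hDV u x t hu
  have h : HasDerivAt (fun x' => chF22 u α β x' t)
      (-(α * pdx u x t) + pdx (fun c d => pdx u c d) x t) x := by
    simp only [chF22]
    exact (((hU.const_mul α).const_sub (- β / α)).add_const (1 / α)).add hV
  simpa [pdx] using h.deriv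

lemma pdx_chF32 (hu : Smooth2 u) (x t : ℝ) :
    pdx (chF32 u ε α β) x t =
      ε * pdx u x t / α ^ 2 * (β - 1)
        - (pdx u x t * (pdx (fun c d => pdx u c d) x t - ε * u x t)
            + u x t * (pdx (fun a b => pdx (fun c d => pdx u c d) a b) x t - ε * pdx u x t))
        + pdx (fun c d => pdx u c d) x t / α - pdx u x t
        - pdx (fun c d => pdx u c d) x t * β / α := by
  have hU := hDU u x t hu
  have hV := hDV u x t hu
  have hW := hDW u x t hu
  have h : HasDerivAt (fun x' => chF32 u ε α β x' t)
      (ε * pdx u x t / α ^ 2 * (β - 1)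
        - (pdx u x t * (pdx (fun c d => pdx u c d) x t - ε * u x t)
            + u x t * (pdx (fun a b => pdx (fun c d => pdx u c d) a b) x t - ε * pdx u x t))
        + pdx (fun c d => pdx u c d) x t / α - pdx u x t
        - pdx (fun c d => pdx u c d) x t * β / α) x := by
    simp only [chF32, mch]
    exact ((((((((hU.const_mul ε).div_const (α ^ 2)).mul_const (β - 1)).sub
        (hU.mul (hW.sub (hU.const_mul ε)))).add_const (1 / α ^ 2)).add
        (hV.div_const α)).sub hU).sub_const (β / α ^ 2)).sub
        ((hV.mul_const β).div_const α)
  simpa [pdx] using h.deriv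

lemma pdt_mch_add (hu : Smooth2 u) (c : ℝ) (x t : ℝ) :
    pdt (fun a b => mch u ε a b + c) x t =
      pdt (fun a b => pdx (fun c d => pdx u c d) a b) x t - ε * pdt u x t := by
  have hW := hTW u x t hu
  have hU := hTU u x t hu
  have h : HasDerivAt (fun t' => mch u ε x t' + c)
      (pdt (fun a b => pdx (fun c d => pdx u c d) a b) x t - ε * pdt u x t) t := by
    simp only [mch]
    exact (hW.sub (hU.const_mul ε)).add_const c
  simpa [pdt] using h.deriv

lemma pdt_mch_sub_add (hu : Smooth2 u) (c d : ℝ) (x t : ℝ) :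
    pdt (fun a b => mch u ε a b - c + d) x t =
      pdt (fun a b => pdx (fun c d => pdx u c d) a b) x t - ε * pdt u x t := by
  have hW := hTW u x t hu
  have hU := hTU u x t hu
  have h : HasDerivAt (fun t' => mch u ε x t' - c + d)
      (pdt (fun a b => pdx (fun c d => pdx u c d) a b) x t - ε * pdt u x t) t := by
    simp only [mch]
    exact ((hW.sub (hU.const_mul ε)).sub_const c).add_const d
  simpa [pdt] using h.deriv

end aux

/-- the Camassa--Holm (ε = 1) and Hunter--Saxton (ε = 0) equations
describe pseudo-spherical surfaces. -/
theorem ch_hs_pss (u : ℝ → ℝ → ℝ) (hu : Smooth2 u) (ε α β : ℝ)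
    (hε : ε = 0 ∨ ε = 1) (hα : α ≠ 0)
    (hconstraint : α ^ 2 + β ^ 2 - 1 = ε * ((β - 1) / α) ^ 2)
    (heq : ∀ x t,
      -2 * pdx u x t * pdx (fun c d => pdx u c d) x t
        + 3 * ε * pdx u x t * u x t
        - u x t * pdx (fun a b => pdx (fun c d => pdx u c d) a b) x t
        + ε * pdt u x t
        - pdt (fun a b => pdx (fun c d => pdx u c d) a b) x t = 0) :
    ∀ x t : ℝ,
      (pdx (chF12 u ε α β) x t
          - pdt (fun a b => mch u ε a b - β + ε / α ^ 2 * (β - 1)) x t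
        = (mch u ε x t + 1) * chF22 u α β x t - chF32 u ε α β x t * α) ∧
      (pdx (chF22 u α β) x t - pdt (fun _ _ => α) x t
        = (mch u ε x t - β + ε / α ^ 2 * (β - 1)) * chF32 u ε α β x t
          - chF12 u ε α β x t * (mch u ε x t + 1)) ∧
      (pdx (chF32 u ε α β) x t - pdt (fun a b => mch u ε a b + 1) x t
        = (mch u ε x t - β + ε / α ^ 2 * (β - 1)) * chF22 u α β x t
          - chF12 u ε α β x t * α) := by
  intro x t
  have he2 : ε ^ 2 = ε := by rcases hε with h | h <;> simp [h]
  set u0 := u x t with hu0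
  set u1 := pdx u x t with hu1
  set u2 := pdx (fun c d => pdx u c d) x t with hu2
  set u3 := pdx (fun a b => pdx (fun c d => pdx u c d) a b) x t with hu3
  set ut := pdt u x t with hut
  have hT2 : pdt (fun a b => pdx (fun c d => pdx u c d) a b) x t
      = -2 * u1 * u2 + 3 * ε * u1 * u0 - u0 * u3 + ε * ut := by
    have := heq x t; linarith
  have hmch : mch u ε x t = u2 - ε * u0 := rfl
  have hdt0 : pdt (fun _ _ : ℝ => α) x t = 0 := by simp [pdt]
  refine ⟨?_, ?_, ?_⟩
  · rw [pdx_chF12 u ε α β hu x t, pdt_mch_sub_add u ε hu β (ε / α ^ 2 * (β - 1)) x t,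
      hT2, hmch]
    simp only [chF22, chF32, hmch, ← hu0, ← hu1, ← hu2, ← hu3, ← hut]
    field_simp
    ring
  · rw [pdx_chF22 u α β hu x t, hdt0, hmch]
    simp only [chF12, chF22, chF32, hmch, ← hu0, ← hu1, ← hu2, ← hu3, ← hut]
    have hinv : α * α⁻¹ = 1 := mul_inv_cancel₀ hα
    linear_combination (-α⁻¹ ^ 2 + u0 * ε * α⁻¹ ^ 2 - u1 * α⁻¹) * hconstraint
      + (1 + α * α⁻¹ + u1 * α - u0 * ε - u0 * ε * α * α⁻¹) * hinv
  · rw [pdx_chF32 u ε α β hu x t, pdt_mch_add u ε hu 1 x t, hT2, hmch]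
    simp only [chF12, chF22, chF32, hmch, ← hu0, ← hu1, ← hu2, ← hu3, ← hut]
    have hinv : α * α⁻¹ = 1 := mul_inv_cancel₀ hα
    linear_combination (-α⁻¹) * hconstraint
      + (α⁻¹ + α - β * α⁻¹ + u1 - u1 * β - u0 * ε * α⁻¹ + u0 * ε * β * α⁻¹) * hinv
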